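/- Assume |q| < 1. Then for every 1 ≤ r ≤ m the series ∑_{k=0}^{∞} ∑_{|μ|=k} q^k s_μ t̃_r s_μ^* (with t̃_r := (1−Q)t_r and inner sums over words μ in {1,…,n} of length k) converges in norm in A, and its sum equals t_r. -/
import Mathlib


open scoped BigOperators

noncomputable section

variable {A : Type*} [NormedRing A] [StarRing A] [CStarRing A]
  [NormedAlgebra ℂ A] [StarModule ℂ A] [CompleteSpace A]

/-- The product `s_{μ₁} ⋯ s_{μ_k}` associated to a word `μ : Fin k → Fin n`. -/
def sProd {n : ℕ} (s : Fin n → A) {k : ℕ} (μ : Fin k → Fin n) : A :=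
  (List.ofFn fun i => s (μ i)).prod

lemma sProd_zero {n : ℕ} (s : Fin n → A) (μ : Fin 0 → Fin n) : sProd s μ = 1 := rfl

lemma sProd_snoc {n k : ℕ} (s : Fin n → A) (μ : Fin k → Fin n) (i : Fin n) :
    sProd s (Fin.snoc μ i) = sProd s μ * s i := by
  unfold sProd
  rw [List.ofFn_succ']
  simp [Fin.snoc_castSucc, Fin.snoc_last]

lemma snoc_eq_snoc_iff {n k : ℕ} (a b : Fin k → Fin n) (i j : Fin n) :
    (Fin.snoc a i : Fin (k+1) → Fin n) = Fin.snoc b j ↔ a = b ∧ i = j := by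
  constructor
  · intro h
    constructor
    · have := congrArg Fin.init h
      simpa [Fin.init_snoc] using this
    · have := congrFun h (Fin.last k)
      simpa [Fin.snoc_last] using this
  · rintro ⟨rfl, rfl⟩; rfl

/-- Equivalence `(Fin k → Fin n) × Fin n ≃ (Fin (k+1) → Fin n)` by `snoc`. -/
def snocEquiv (n k : ℕ) : ((Fin k → Fin n) × Fin n) ≃ (Fin (k+1) → Fin n) where
  toFun p := Fin.snoc p.1 p.2
  invFun μ := (Fin.init μ, μ (Fin.last k))
  left_inv p := by simp [Fin.init_snoc, Fin.snoc_last]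
  right_inv μ := by simp [Fin.snoc_init_self]

lemma sProd_orth {n : ℕ} (s : Fin n → A)
    (hs : ∀ i j, star (s i) * s j = if i = j then 1 else 0) :
    ∀ {k : ℕ} (μ ν : Fin k → Fin n),
      star (sProd s μ) * sProd s ν = if μ = ν then 1 else 0 := by
  intro k
  induction k with
  | zero =>
    intro μ ν
    simp [sProd_zero, Subsingleton.elim μ ν]
  | succ k ih =>
    intro μ ν
    rw [← Fin.snoc_init_self μ, ← Fin.snoc_init_self ν, sProd_snoc, sProd_snoc]
    rw [star_mul]
    have h1 : star (s (μ (Fin.last k))) * star (sProd s (Fin.init μ)) *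
        (sProd s (Fin.init ν) * s (ν (Fin.last k)))
        = star (s (μ (Fin.last k))) *
          ((star (sProd s (Fin.init μ)) * sProd s (Fin.init ν)) * s (ν (Fin.last k))) := by
      noncomm_ring
    rw [h1, ih]
    simp only [snoc_eq_snoc_iff]
    by_cases h : Fin.init μ = Fin.init ν
    · rw [if_pos h, one_mul, hs]
      by_cases h2 : μ (Fin.last k) = ν (Fin.last k) <;> simp [h, h2]
    · rw [if_neg h, zero_mul, mul_zero, if_neg (fun hc => h hc.1)]

lemma sProd_comm {n m : ℕ} (q : ℂ) (s : Fin n → A) (t : Fin m → A)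
    (hst : ∀ j r, star (s j) * t r = q • (t r * star (s j))) (r : Fin m) :
    ∀ {k : ℕ} (μ : Fin k → Fin n),
      star (sProd s μ) * t r = q ^ k • (t r * star (sProd s μ)) := by
  intro k
  induction k with
  | zero => intro μ; simp [sProd_zero]
  | succ k ih =>
    intro μ
    rw [← Fin.snoc_init_self μ, sProd_snoc, star_mul, mul_assoc, ih, mul_smul_comm,
      ← mul_assoc, hst]
    rw [smul_mul_assoc, smul_smul, ← pow_succ, mul_assoc]

lemma P_isProj {n k : ℕ} (s : Fin n → A)
    (hs : ∀ i j, star (s i) * s j = if i = j then 1 else 0) :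
    (∑ μ : Fin k → Fin n, sProd s μ * star (sProd s μ)) *
      (∑ μ : Fin k → Fin n, sProd s μ * star (sProd s μ)) =
      ∑ μ : Fin k → Fin n, sProd s μ * star (sProd s μ) := by
  rw [Finset.sum_mul_sum]
  refine Finset.sum_congr rfl fun μ _ => ?_
  have : ∀ ν : Fin k → Fin n,
      sProd s μ * star (sProd s μ) * (sProd s ν * star (sProd s ν))
        = if μ = ν then sProd s μ * star (sProd s ν) else 0 := by
    intro ν
    have h1 : sProd s μ * star (sProd s μ) * (sProd s ν * star (sProd s ν))
        = sProd s μ * ((star (sProd s μ) * sProd s ν) * star (sProd s ν)) := by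
      rw [mul_assoc, mul_assoc]
    rw [h1, sProd_orth s hs]
    by_cases h : μ = ν <;> simp [h]
  simp only [this]
  simp

lemma X_norm_le_one {n m k : ℕ} (s : Fin n → A) (t : Fin m → A)
    (hs : ∀ i j, star (s i) * s j = if i = j then 1 else 0)
    (ht : ∀ r l, star (t r) * t l = if r = l then 1 else 0) (r : Fin m) :
    ‖∑ μ : Fin k → Fin n, sProd s μ * t r * star (sProd s μ)‖ ≤ 1 := by
  set X : A := ∑ μ : Fin k → Fin n, sProd s μ * t r * star (sProd s μ) with hX
  set P : A := ∑ μ : Fin k → Fin n, sProd s μ * star (sProd s μ) with hP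
  have hXX : star X * X = P := by
    rw [hX, hP]
    rw [star_sum]
    rw [Finset.sum_mul_sum]
    refine Finset.sum_congr rfl fun μ _ => ?_
    have key : ∀ ν : Fin k → Fin n,
        star (sProd s μ * t r * star (sProd s μ)) * (sProd s ν * t r * star (sProd s ν))
          = if μ = ν then sProd s μ * star (sProd s ν) else 0 := by
      intro ν
      have h1 : star (sProd s μ * t r * star (sProd s μ)) * (sProd s ν * t r * star (sProd s ν))
          = sProd s μ * (star (t r) * ((star (sProd s μ) * sProd s ν) * (t r * star (sProd s ν)))) := by
        simp only [star_mul, star_star]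
        noncomm_ring
      rw [h1, sProd_orth s hs]
      by_cases h : μ = ν
      · simp only [if_pos h, one_mul, ← mul_assoc, ht]
        simp [h]
      · simp [h]
    simp only [key]
    simp
  have hPnorm : ‖P‖ ≤ 1 := by
    have hstar : star P = P := by
      rw [hP, star_sum]
      refine Finset.sum_congr rfl fun μ _ => ?_
      simp [star_mul]
    have hPP : P * P = P := by
      rw [hP]; exact P_isProj s hs
    have h2 : ‖P‖ * ‖P‖ = ‖P‖ := by
      rw [← CStarRing.norm_star_mul_self (x := P), hstar, hPP]
    nlinarith [norm_nonneg P]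
  have h3 : ‖X‖ * ‖X‖ ≤ 1 := by
    rw [← CStarRing.norm_star_mul_self (x := X), hXX]; exact hPnorm
  nlinarith [norm_nonneg X]

/-- for `|q| < 1` the series `∑_{k≥0} ∑_{|μ|=k} q^k s_μ t̃_r s_μ^*`
converges in norm with sum `t_r`. -/
theorem stmt5 {n m : ℕ} (q : ℂ) (hq : ‖q‖ < 1) (s : Fin n → A) (t : Fin m → A)
    (hs : ∀ i j, star (s i) * s j = if i = j then 1 else 0)
    (ht : ∀ r l, star (t r) * t l = if r = l then 1 else 0)
    (hst : ∀ j r, star (s j) * t r = q • (t r * star (s j)))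
    (Q : A) (hQ : Q = ∑ i : Fin n, s i * star (s i))
    (tt : Fin m → A) (htt : ∀ r, tt r = (1 - Q) * t r) (r : Fin m) :
    Filter.Tendsto
      (fun N : ℕ => ∑ k ∈ Finset.range N, ∑ μ : Fin k → Fin n,
        q ^ k • (sProd s μ * tt r * star (sProd s μ)))
      Filter.atTop (nhds (t r)) := by
  set F : ℕ → A := fun k => ∑ μ : Fin k → Fin n,
    q ^ k • (sProd s μ * t r * star (sProd s μ)) with hF
  have hF0 : F 0 = t r := by
    simp only [hF]
    rw [Fintype.sum_unique]
    simp [sProd_zero]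
  have hstep : ∀ k : ℕ, (∑ μ : Fin k → Fin n,
      q ^ k • (sProd s μ * tt r * star (sProd s μ))) = F k - F (k + 1) := by
    intro k
    have hFsucc : F (k + 1) = ∑ p : (Fin k → Fin n) × Fin n,
        q ^ (k + 1) • (sProd s (Fin.snoc p.1 p.2) * t r * star (sProd s (Fin.snoc p.1 p.2))) := by
      simp only [hF]
      exact (Fintype.sum_equiv (snocEquiv n k) _ _ (by intro p; rfl)).symm
    have expand : ∀ μ : Fin k → Fin n,
        q ^ k • (sProd s μ * tt r * star (sProd s μ))
          = q ^ k • (sProd s μ * t r * star (sProd s μ))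
            - ∑ i : Fin n, q ^ (k+1) • (sProd s (Fin.snoc μ i) * t r * star (sProd s (Fin.snoc μ i))) := by
      intro μ
      rw [htt, sub_mul, one_mul, hQ]
      have hQt : (∑ i : Fin n, s i * star (s i)) * t r
          = ∑ i : Fin n, q • (s i * (t r * star (s i))) := by
        rw [Finset.sum_mul]
        refine Finset.sum_congr rfl fun i _ => ?_
        rw [mul_assoc, hst, mul_smul_comm]
      rw [hQt]
      rw [mul_sub, sub_mul, smul_sub]
      congr 1
      rw [Finset.mul_sum, Finset.sum_mul, Finset.smul_sum]
      refine Finset.sum_congr rfl fun i _ => ?_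
      rw [sProd_snoc, mul_smul_comm, smul_mul_assoc, smul_smul, ← pow_succ]
      congr 1
      simp only [star_mul]
      noncomm_ring
    calc (∑ μ : Fin k → Fin n, q ^ k • (sProd s μ * tt r * star (sProd s μ)))
        = ∑ μ : Fin k → Fin n, (q ^ k • (sProd s μ * t r * star (sProd s μ))
            - ∑ i : Fin n, q ^ (k+1) • (sProd s (Fin.snoc μ i) * t r * star (sProd s (Fin.snoc μ i)))) :=
          Finset.sum_congr rfl fun μ _ => expand μ
      _ = F k - F (k + 1) := by
          rw [Finset.sum_sub_distrib, hFsucc]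
          simp only [hF]
          congr 1
          rw [← Finset.sum_product', Finset.univ_product_univ]
  have hpartial : ∀ N : ℕ, (∑ k ∈ Finset.range N, ∑ μ : Fin k → Fin n,
      q ^ k • (sProd s μ * tt r * star (sProd s μ))) = t r - F N := by
    intro N
    rw [← hF0, ← Finset.sum_range_sub' F N]
    exact Finset.sum_congr rfl fun k _ => hstep k
  have hFto0 : Filter.Tendsto F Filter.atTop (nhds 0) := by
    rw [tendsto_zero_iff_norm_tendsto_zero]
    have hb : ∀ N, ‖F N‖ ≤ ‖q‖ ^ N := by
      intro N
      have hsm : F N = q ^ N • (∑ μ : Fin N → Fin n, sProd s μ * t r * star (sProd s μ)) := by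
        simp only [hF]
        rw [Finset.smul_sum]
      rw [hsm, norm_smul, norm_pow]
      calc ‖q‖ ^ N * ‖∑ μ : Fin N → Fin n, sProd s μ * t r * star (sProd s μ)‖
          ≤ ‖q‖ ^ N * 1 :=
            mul_le_mul_of_nonneg_left (X_norm_le_one s t hs ht r) (by positivity)
        _ = ‖q‖ ^ N := mul_one _
    exact squeeze_zero (fun N => norm_nonneg _) hb
      (tendsto_pow_atTop_nhds_zero_of_lt_one (norm_nonneg q) hq)
  have hfin : Filter.Tendsto (fun N => t r - F N) Filter.atTop (nhds (t r)) := by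
    simpa using (Filter.Tendsto.const_sub (t r) hFto0)
  simpa only [hpartial] using hfin
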